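/- The category A = Fun(C, G) has enough flat objects: every functor F in A admits an epimorphism P → F with P flat. -/

import Mathlib

/-!
Pick flat epimorphisms `Q c ⟶ F.obj c` in `G`. The functor `P = ⊕_c L_c(Q c)`, with
`P.obj d = ∐_{c ⟶ d} Q c`, maps onto `F`, and it is flat.

Purity of `0 → K → E → X → 0` in `G` amounts to the biduality `K ⟶ K⁺⁺` extending along
`K ⟶ E`. Pushing out along `K ⟶ K⁺⁺`, such extensions glue over the summands of a coproduct,
so coproducts of flat objects are flat and every `P.obj d` is flat. Objectwise purity is not
purity in the functor category, which asks for a natural retraction of `p⁺ : P⁺ ⟶ E⁺`. Since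
each `Q c` is flat, `(ι_c)⁺ : P(c)⁺ ⟶ (Q c)⁺` factors through `p(c)⁺`; transposing these
factorizations along `L_c ⊣ ev_c` gives the retraction.
-/

set_option linter.unusedSectionVars false

open CategoryTheory CategoryTheory.Limits CategoryTheory.MonoidalCategory
  CategoryTheory.MonoidalClosed

universe v u

namespace FlatFunctorsPaper

variable {G : Type u} [Category.{v} G] [Abelian G] [MonoidalCategory G]
  [SymmetricCategory G] [MonoidalClosed G] [MonoidalPreadditive G]

/-- `X⁺ = [X, J]`, the internal hom into `J`. -/
noncomputable def pObj (J X : G) : G := (ihom X).obj J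

/-- The contravariant functorial action of `(-)⁺ = [-, J]`. -/
noncomputable def pMap (J : G) {X Y : G} (f : X ⟶ Y) : pObj J Y ⟶ pObj J X :=
  (MonoidalClosed.pre f).app J

@[simp] lemma pMap_id (J X : G) : pMap J (𝟙 X) = 𝟙 (pObj J X) := by
  simp [pMap, pObj]

@[simp] lemma pMap_comp (J : G) {X Y Z : G} (f : X ⟶ Y) (g : Y ⟶ Z) :
    pMap J (f ≫ g) = pMap J g ≫ pMap J f := by
  simp [pMap]; rfl

@[simp] lemma pMap_zero (J : G) (X Y : G) : pMap J (0 : X ⟶ Y) = 0 := by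
  apply MonoidalClosed.uncurry_injective
  rw [pMap]
  erw [MonoidalClosed.uncurry_pre, MonoidalClosed.uncurry_eq]
  erw [MonoidalPreadditive.whiskerLeft_zero]
  simp; rfl

/-- The canonical biduality morphism `X ⟶ X⁺⁺` in `G`. -/
noncomputable def bid (J X : G) : X ⟶ pObj J (pObj J X) :=
  MonoidalClosed.curry ((β_ (pObj J X) X).hom ≫ (ihom.ev X).app J)

lemma bid_natural (J : G) {X Y : G} (f : X ⟶ Y) :
    f ≫ bid J Y = bid J X ≫ pMap J (pMap J f) := by
  apply MonoidalClosed.uncurry_injective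
  erw [MonoidalClosed.uncurry_natural_left (f := f) (g := bid J Y),
    MonoidalClosed.uncurry_natural_left (f := bid J X) (g := pMap J (pMap J f))]
  dsimp only [bid, pMap, pObj]
  erw [MonoidalClosed.uncurry_curry, MonoidalClosed.uncurry_pre]
  erw [whisker_exchange_assoc]
  erw [← MonoidalClosed.uncurry_eq, MonoidalClosed.uncurry_curry]
  simp

section Dual

variable {D : Type v} [SmallCategory D]

/-- The objectwise dual `F⁺` of a functor `F : D ⥤ G`, a functor `Dᵒᵖ ⥤ G`. -/
@[simps] noncomputable def dObj (J : G) (F : D ⥤ G) : Dᵒᵖ ⥤ G where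
  obj c := pObj J (F.obj c.unop)
  map f := pMap J (F.map f.unop)
  map_id c := by simp
  map_comp f g := by simp

/-- The dual of a natural transformation. -/
@[simps] noncomputable def dMap (J : G) {F F' : D ⥤ G} (η : F ⟶ F') :
    dObj J F' ⟶ dObj J F where
  app c := pMap J (η.app c.unop)
  naturality _ _ f := by
    erw [dObj_map, dObj_map]
    erw [← pMap_comp, ← pMap_comp, NatTrans.naturality]

@[simp] lemma dMap_id (J : G) (F : D ⥤ G) : dMap J (𝟙 F) = 𝟙 (dObj J F) := by
  ext c; simp; rfl

@[simp] lemma dMap_comp (J : G) {F F' F'' : D ⥤ G} (α : F ⟶ F') (β : F' ⟶ F'') :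
    dMap J (α ≫ β) = dMap J β ≫ dMap J α := by
  ext c; simp; rfl

@[simp] lemma dMap_zero (J : G) (F F' : D ⥤ G) : dMap J (0 : F ⟶ F') = 0 := by
  ext c; simp; rfl

/-- The double dual `F⁺⁺` of a functor `F : D ⥤ G`. -/
noncomputable def ddObj (J : G) (F : D ⥤ G) : D ⥤ G := opOp D ⋙ dObj J (dObj J F)

/-- The canonical natural transformation `φ_F : F ⟶ F⁺⁺`. -/
noncomputable def phi (J : G) (F : D ⥤ G) : F ⟶ ddObj J F where
  app c := bid J (F.obj c)
  naturality _ _ f := bid_natural J (F.map f)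

/-- The dual of a short exact sequence (short complex) of functors. -/
noncomputable def dSC (J : G) (S : ShortComplex (D ⥤ G)) : ShortComplex (Dᵒᵖ ⥤ G) :=
  ShortComplex.mk (dMap J S.g) (dMap J S.f) (by rw [← dMap_comp, S.zero, dMap_zero])

/-- A short exact sequence of functors is *pure* if its dual splits. -/
def IsPure (J : G) (S : ShortComplex (D ⥤ G)) : Prop := Nonempty ((dSC J S).Splitting)

/-- A functor `F` is *flat* if every short exact sequence ending in `F` is pure. -/
def IsFlat (J : G) (F : D ⥤ G) : Prop :=
  ∀ ⦃K E : D ⥤ G⦄ (i : K ⟶ E) (p : E ⟶ F) (w : i ≫ p = 0),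
    (ShortComplex.mk i p w).ShortExact → IsPure J (ShortComplex.mk i p w)

/-- A functor `X` is *cotorsion* if every short exact sequence `0 → X → E → F → 0`
with `F` flat splits. -/
def IsCotorsion (J : G) (X : D ⥤ G) : Prop :=
  ∀ ⦃E F : D ⥤ G⦄ (i : X ⟶ E) (p : E ⟶ F) (w : i ≫ p = 0),
    (ShortComplex.mk i p w).ShortExact → IsFlat J F →
      Nonempty (ShortComplex.mk i p w).Splitting

/-- A functor `P` is *pure injective* if every morphism into `P` extends along
pure monomorphisms. -/
def IsPureInjective (J : G) (P : D ⥤ G) : Prop :=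
  ∀ ⦃K E L : D ⥤ G⦄ (i : K ⟶ E) (p : E ⟶ L) (w : i ≫ p = 0),
    (ShortComplex.mk i p w).ShortExact → IsPure J (ShortComplex.mk i p w) →
      ∀ f : K ⟶ P, ∃ h : E ⟶ P, i ≫ h = f

end Dual

section ObjectLevel

/-- The dual of a short exact sequence (short complex) in `G`. -/
noncomputable def dSCG (J : G) (S : ShortComplex G) : ShortComplex G :=
  ShortComplex.mk (pMap J S.g) (pMap J S.f) (by rw [← pMap_comp, S.zero, pMap_zero])

/-- A short exact sequence in `G` is *pure* if its dual splits. -/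
def IsPureG (J : G) (S : ShortComplex G) : Prop := Nonempty ((dSCG J S).Splitting)

/-- An object `X` of `G` is *flat* if every short exact sequence ending in `X` is pure. -/
def IsFlatG (J X : G) : Prop :=
  ∀ ⦃K E : G⦄ (i : K ⟶ E) (p : E ⟶ X) (w : i ≫ p = 0),
    (ShortComplex.mk i p w).ShortExact → IsPureG J (ShortComplex.mk i p w)

/-- An object `X` of `G` is *cotorsion* if every short exact sequence
`0 → X → E → F → 0` with `F` flat splits. -/
def IsCotorsionG (J X : G) : Prop :=
  ∀ ⦃E F : G⦄ (i : X ⟶ E) (p : E ⟶ F) (w : i ≫ p = 0),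
    (ShortComplex.mk i p w).ShortExact → IsFlatG J F →
      Nonempty (ShortComplex.mk i p w).Splitting

/-- The flat objects and the cotorsion objects form a complete cotorsion theory in `G`:
every object has a special flat precover and a special cotorsion preenvelope. -/
def CompleteFlatCotorsionTheoryG (J : G) : Prop :=
  ∀ X : G,
    (∃ (Cx F : G) (i : Cx ⟶ F) (p : F ⟶ X) (w : i ≫ p = 0),
      (ShortComplex.mk i p w).ShortExact ∧ IsFlatG J F ∧ IsCotorsionG J Cx) ∧
    (∃ (Cx F : G) (i : X ⟶ Cx) (p : Cx ⟶ F) (w : i ≫ p = 0),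
      (ShortComplex.mk i p w).ShortExact ∧ IsCotorsionG J Cx ∧ IsFlatG J F)

end ObjectLevel

section Complexes

variable {D : Type v} [SmallCategory D]

/-- A *flat complex*: an acyclic complex of flat functors all of whose kernels of
differentials are flat (equivalently, a pure acyclic complex of flat functors). -/
def IsFlatComplex (J : G) (X : CochainComplex (D ⥤ G) ℤ) : Prop :=
  (∀ n, X.ExactAt n) ∧ (∀ n, IsFlat J (X.X n)) ∧
    ∀ n : ℤ, IsFlat J (kernel (X.d n (n + 1)))

/-- A *cotorsion complex*: an acyclic complex of cotorsion functors all of whose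
kernels of differentials are cotorsion. -/
def IsCotorsionComplex (J : G) (X : CochainComplex (D ⥤ G) ℤ) : Prop :=
  (∀ n, X.ExactAt n) ∧ (∀ n, IsCotorsion J (X.X n)) ∧
    ∀ n : ℤ, IsCotorsion J (kernel (X.d n (n + 1)))

/-- A complex is *dg-cotorsion* if every short exact sequence of complexes
`0 → X → E → F → 0` with `F` a flat complex splits. -/
def IsDgCotorsion (J : G) (X : CochainComplex (D ⥤ G) ℤ) : Prop :=
  ∀ ⦃E F : CochainComplex (D ⥤ G) ℤ⦄ (i : X ⟶ E) (p : E ⟶ F) (w : i ≫ p = 0),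
    (ShortComplex.mk i p w).ShortExact → IsFlatComplex J F →
      Nonempty (ShortComplex.mk i p w).Splitting

end Complexes

-- Lets `rw` see `X⁺` and `F⁺.obj c` as the internal homs they are.
attribute [reducible] pObj dObj

section Transpose

variable (J : G)

/-- The bijection `(T ⟶ X⁺) ≃ (X ⟶ T⁺)` coming from the symmetry of `⊗`. -/
noncomputable def dualTranspose {T X : G} (t : T ⟶ pObj J X) : X ⟶ pObj J T :=
  curry ((β_ T X).hom ≫ uncurry t)

lemma uncurry_dualTranspose {T X : G} (t : T ⟶ pObj J X) :
    uncurry (dualTranspose J t) = (β_ T X).hom ≫ uncurry t :=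
  uncurry_curry _

@[simp] lemma dualTranspose_dualTranspose {T X : G} (t : T ⟶ pObj J X) :
    dualTranspose J (dualTranspose J t) = t := by
  apply uncurry_injective
  rw [uncurry_dualTranspose, uncurry_dualTranspose, SymmetricCategory.symmetry_assoc]

lemma dualTranspose_injective {T X : G} :
    Function.Injective (dualTranspose J : (T ⟶ pObj J X) → (X ⟶ pObj J T)) :=
  Function.LeftInverse.injective (dualTranspose_dualTranspose J)

lemma dualTranspose_comp {T' T X : G} (h : T' ⟶ T) (t : T ⟶ pObj J X) :
    dualTranspose J (h ≫ t) = dualTranspose J t ≫ pMap J h := by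
  apply uncurry_injective
  rw [uncurry_dualTranspose, uncurry_natural_left, uncurry_natural_left, pMap, uncurry_pre,
    whisker_exchange_assoc, ← uncurry_eq, uncurry_dualTranspose,
    BraidedCategory.braiding_naturality_left_assoc]

lemma comp_dualTranspose {T X' X : G} (k : X' ⟶ X) (t : T ⟶ pObj J X) :
    k ≫ dualTranspose J t = dualTranspose J (t ≫ pMap J k) := by
  apply uncurry_injective
  rw [uncurry_natural_left, uncurry_dualTranspose, uncurry_dualTranspose,
    uncurry_natural_left, pMap, uncurry_pre, whisker_exchange_assoc,
    ← uncurry_eq, BraidedCategory.braiding_naturality_right_assoc]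

@[simp] lemma dualTranspose_zero {T X : G} : dualTranspose J (0 : T ⟶ pObj J X) = 0 := by
  simpa using dualTranspose_comp J (0 : T ⟶ T) (0 : T ⟶ pObj J X)

lemma dualTranspose_id (X : G) : dualTranspose J (𝟙 (pObj J X)) = bid J X := by
  rw [dualTranspose, bid, uncurry_id_eq_ev]

end Transpose

section Duality

variable (J : G)

instance {X Y : G} (h : X ⟶ Y) [Epi h] : Mono (pMap J h) :=
  ⟨fun u v huv => dualTranspose_injective J <| by
    rw [← cancel_epi h, comp_dualTranspose, comp_dualTranspose, huv]⟩

lemma pMap_sigma_hom_ext {I : Type*} {X : I → G} [HasCoproduct X] {Z : G}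
    {u v : Z ⟶ pObj J (∐ X)} (h : ∀ i, u ≫ pMap J (Sigma.ι X i) = v ≫ pMap J (Sigma.ι X i)) :
    u = v :=
  dualTranspose_injective J <| Sigma.hom_ext _ _ fun i => by
    rw [comp_dualTranspose, comp_dualTranspose, h i]

lemma dualTranspose_desc_comp_pMap_ι {I : Type*} {X : I → G} [HasCoproduct X] {T : G}
    (t : ∀ i, T ⟶ pObj J (X i)) (i : I) :
    dualTranspose J (Sigma.desc fun j => dualTranspose J (t j)) ≫ pMap J (Sigma.ι X i) = t i := by
  rw [← dualTranspose_comp, Sigma.ι_desc, dualTranspose_dualTranspose]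

noncomputable def isLimitKernelForkPMap {K E X : G} {f : K ⟶ E} {g : E ⟶ X} {w : f ≫ g = 0}
    (hg : IsColimit (CokernelCofork.ofπ g w)) :
    IsLimit (KernelFork.ofι (pMap J g) (by rw [← pMap_comp, w, pMap_zero])) := by
  have : Epi g := epi_of_isColimit_cofork hg
  refine KernelFork.IsLimit.ofι' _ _ fun {T} t ht => ?_
  have hft : f ≫ dualTranspose J t = 0 := by rw [comp_dualTranspose, ht, dualTranspose_zero]
  obtain ⟨v, hv : g ≫ v = dualTranspose J t⟩ := CokernelCofork.IsColimit.desc' hg _ hft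
  exact ⟨dualTranspose J v, by rw [← dualTranspose_comp, hv, dualTranspose_dualTranspose]⟩

lemma exact_dSCG {S : ShortComplex G} (hS : S.ShortExact) : (dSCG J S).Exact :=
  ShortComplex.exact_of_f_is_kernel _ (isLimitKernelForkPMap J hS.gIsCokernel)

end Duality

section Extensions

variable {A : Type*} [Category A] [Abelian A] {K E X : A} {f : K ⟶ E} {g : E ⟶ X}
  {w : f ≫ g = 0}

lemma shortExact_pullback (hS : (ShortComplex.mk f g w).ShortExact) {Y : A} (ι : Y ⟶ X) :
    (ShortComplex.mk (pullback.lift f (0 : K ⟶ Y) (by rw [w, zero_comp])) (pullback.snd g ι)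
      (pullback.lift_snd _ _ _)).ShortExact := by
  have : Mono f := hS.mono_f
  have : Epi g := hS.epi_g
  have hlift : (pullback.lift f (0 : K ⟶ Y) (by rw [w, zero_comp]) : K ⟶ pullback g ι) ≫
      pullback.fst g ι = f :=
    pullback.lift_fst _ _ _
  have : Mono (pullback.lift f (0 : K ⟶ Y) (by rw [w, zero_comp]) : K ⟶ pullback g ι) :=
    mono_of_mono_fac hlift
  refine .mk' (ShortComplex.exact_of_f_is_kernel _ ?_) inferInstance inferInstance
  refine KernelFork.IsLimit.ofι' _ _ fun {T} t ht => ?_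
  have htg : (t ≫ pullback.fst g ι) ≫ g = 0 := by
    rw [Category.assoc, pullback.condition, ← Category.assoc, ht, zero_comp]
  refine ⟨hS.exact.lift _ htg, pullback.hom_ext ?_ ?_⟩
  · rw [Category.assoc, hlift, hS.exact.lift_f]
  · rw [Category.assoc, pullback.lift_snd, comp_zero, ht]

lemma exact_pushout (hS : (ShortComplex.mk f g w).ShortExact) {Z : A} (φ : K ⟶ Z) :
    (ShortComplex.mk (pushout.inr f φ) (pushout.desc g 0 (by rw [w, comp_zero]))
      (pushout.inr_desc _ _ _)).Exact := by
  have : Epi g := hS.epi_g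
  have : Epi (pushout.desc g (0 : Z ⟶ X) (by rw [w, comp_zero]) : pushout f φ ⟶ X) :=
    epi_of_epi_fac (pushout.inl_desc _ _ _)
  refine ShortComplex.exact_of_g_is_cokernel _ <|
    CokernelCofork.IsColimit.ofπ' _ _ fun {T} c hc => ?_
  have hfc : f ≫ pushout.inl f φ ≫ c = 0 := by
    rw [← Category.assoc, pushout.condition, Category.assoc, hc, comp_zero]
  obtain ⟨d, hd : g ≫ d = _⟩ := CokernelCofork.IsColimit.desc' hS.gIsCokernel _ hfc
  exact ⟨d, pushout.hom_ext (by rw [pushout.inl_desc_assoc, hd])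
    (by rw [pushout.inr_desc_assoc, zero_comp, hc])⟩

lemma exists_extension_of_pushout_section (hS : (ShortComplex.mk f g w).ShortExact) {Z : A}
    (φ : K ⟶ Z) (σ : X ⟶ pushout f φ)
    (hσ : σ ≫ pushout.desc g 0 (by rw [w, comp_zero]) = 𝟙 X) :
    ∃ m : E ⟶ Z, f ≫ m = φ := by
  have : Mono f := hS.mono_f
  have hex := exact_pushout hS φ
  set g' : pushout f φ ⟶ X := pushout.desc g 0 (by rw [w, comp_zero])
  set ρ := hex.lift (𝟙 _ - g' ≫ σ) (by simp [g', hσ])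
  have hρ : ρ ≫ pushout.inr f φ = 𝟙 _ - g' ≫ σ := hex.lift_f _ _
  have hinr : pushout.inr f φ ≫ ρ = 𝟙 Z := by
    rw [← cancel_mono (pushout.inr f φ), Category.assoc, hρ, Preadditive.comp_sub,
      pushout.inr_desc_assoc, zero_comp, sub_zero, Category.comp_id, Category.id_comp]
  exact ⟨pushout.inl f φ ≫ ρ, by rw [← Category.assoc, pushout.condition, Category.assoc, hinr,
    Category.comp_id]⟩

lemma exists_pushout_lift_of_extension (hS : (ShortComplex.mk f g w).ShortExact) {Y Z : A}
    (ι : Y ⟶ X) (φ : K ⟶ Z) (m : pullback g ι ⟶ Z)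
    (hm : (pullback.lift f (0 : K ⟶ Y) (by rw [w, zero_comp]) : K ⟶ pullback g ι) ≫ m = φ) :
    ∃ σ : Y ⟶ pushout f φ, σ ≫ pushout.desc g 0 (by rw [w, comp_zero]) = ι := by
  have hP := shortExact_pullback hS ι
  have : Epi (pullback.snd g ι) := hP.epi_g
  have hk : (pullback.lift f (0 : K ⟶ Y) (by rw [w, zero_comp]) : K ⟶ pullback g ι) ≫
      (pullback.fst g ι ≫ pushout.inl f φ - m ≫ pushout.inr f φ) = 0 := by
    rw [Preadditive.comp_sub, pullback.lift_fst_assoc, reassoc_of% hm, pushout.condition,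
      sub_self]
  obtain ⟨σ, hσ : pullback.snd g ι ≫ σ = _⟩ :=
    CokernelCofork.IsColimit.desc' hP.gIsCokernel _ hk
  refine ⟨σ, ?_⟩
  rw [← cancel_epi (pullback.snd g ι), reassoc_of% hσ, Preadditive.sub_comp, Category.assoc,
    pushout.inl_desc, Category.assoc, pushout.inr_desc, comp_zero, sub_zero, pullback.condition]

end Extensions

/-- In terms of `Ext¹`: the restriction map `Ext¹(∐ Q, Z) → ∏ i, Ext¹(Q i, Z)` is injective. -/
lemma exists_extension_of_sigma {A : Type*} [Category A] [Abelian A] {I : Type*} {Q : I → A}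
    [HasCoproduct Q] {K E Z : A} {f : K ⟶ E} {g : E ⟶ ∐ Q} {w : f ≫ g = 0}
    (hS : (ShortComplex.mk f g w).ShortExact) (φ : K ⟶ Z)
    (h : ∀ i, ∃ m : pullback g (Sigma.ι Q i) ⟶ Z,
      (pullback.lift f 0 (by rw [w, zero_comp]) : K ⟶ pullback g (Sigma.ι Q i)) ≫ m = φ) :
    ∃ m : E ⟶ Z, f ≫ m = φ := by
  choose σ hσ using fun i => (h i).elim (exists_pushout_lift_of_extension hS (Sigma.ι Q i) φ)
  exact exists_extension_of_pushout_section hS φ (Sigma.desc σ)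
    (Sigma.hom_ext _ _ fun i => by rw [Sigma.ι_desc_assoc, hσ, Category.comp_id])

section Purity

variable (J : G)

lemma isPureG_iff_exists_section {S : ShortComplex G} (hS : S.ShortExact) :
    IsPureG J S ↔ ∃ s : pObj J S.X₁ ⟶ pObj J S.X₂, s ≫ pMap J S.f = 𝟙 _ := by
  have : Epi S.g := hS.epi_g
  exact ⟨fun ⟨spl⟩ => ⟨spl.s, spl.s_g⟩, fun ⟨s, hs⟩ =>
    ⟨.ofExactOfSection _ (exact_dSCG J hS) s hs (inferInstanceAs (Mono (pMap J S.g)))⟩⟩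

lemma isPureG_iff_exists_extension {S : ShortComplex G} (hS : S.ShortExact) :
    IsPureG J S ↔ ∃ m : S.X₂ ⟶ pObj J (pObj J S.X₁), S.f ≫ m = bid J S.X₁ := by
  rw [isPureG_iff_exists_section J hS]
  constructor
  · rintro ⟨s, hs⟩
    exact ⟨dualTranspose J s, by rw [comp_dualTranspose, hs, dualTranspose_id]⟩
  · rintro ⟨m, hm⟩
    exact ⟨dualTranspose J m, by
      rw [← dualTranspose_comp, hm, ← dualTranspose_id, dualTranspose_dualTranspose]⟩

lemma isFlatG_sigma {I : Type*} {Q : I → G} [HasCoproduct Q] (hQ : ∀ i, IsFlatG J (Q i)) :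
    IsFlatG J (∐ Q) := by
  intro K E f g w hS
  rw [isPureG_iff_exists_extension J hS]
  refine exists_extension_of_sigma hS _ fun i => ?_
  have hP := shortExact_pullback hS (Sigma.ι Q i)
  exact (isPureG_iff_exists_extension J hP).1 (hQ i _ _ _ hP)

lemma exists_pMap_comp_eq_pMap_of_isFlatG {K E X Y : G} {f : K ⟶ E} {g : E ⟶ X}
    {w : f ≫ g = 0} (hS : (ShortComplex.mk f g w).ShortExact) (ι : Y ⟶ X) (hY : IsFlatG J Y) :
    ∃ r : pObj J E ⟶ pObj J Y, pMap J g ≫ r = pMap J ι := by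
  obtain ⟨spl⟩ := hY _ _ _ (shortExact_pullback hS ι)
  obtain ⟨r, hr⟩ : ∃ r : pObj J (pullback g ι) ⟶ pObj J Y, pMap J (pullback.snd g ι) ≫ r = 𝟙 _ :=
    ⟨spl.r, spl.f_r⟩
  refine ⟨pMap J (pullback.fst g ι) ≫ r, ?_⟩
  rw [← Category.assoc, ← pMap_comp, pullback.condition, pMap_comp, Category.assoc, hr,
    Category.comp_id]

end Purity

section FunctorPurity

variable (J : G) {D : Type v} [SmallCategory D]

lemma exact_dSC {S : ShortComplex (D ⥤ G)} (hS : S.ShortExact) : (dSC J S).Exact := by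
  refine ShortComplex.exact_of_f_is_kernel _ (evaluationJointlyReflectsLimits _ fun d => ?_)
  have hSd := hS.map_of_exact ((evaluation D G).obj d.unop)
  exact (KernelFork.isLimitMapConeEquiv _ _).symm (isLimitKernelForkPMap J hSd.gIsCokernel)

lemma isPure_of_retraction {S : ShortComplex (D ⥤ G)} (hS : S.ShortExact)
    (hf : ∀ d, Epi (pMap J (S.f.app d))) (R : dObj J S.X₂ ⟶ dObj J S.X₃)
    (hR : dMap J S.g ≫ R = 𝟙 _) : IsPure J S := by
  have : ∀ d : Dᵒᵖ, Epi ((dMap J S.f).app d) := fun d => hf d.unop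
  exact ⟨.ofExactOfRetraction _ (exact_dSC J hS) R hR (NatTrans.epi_of_epi_app (dMap J S.f))⟩

end FunctorPurity

section FreeFunctor

variable {C : Type v} [SmallCategory C] [HasCoproducts.{v} G]

/-- The functor `⊕_c L_c(Q c)`, where `L_c` is the left adjoint of evaluation at `c`. -/
@[simps] noncomputable abbrev freeFunctor (Q : C → G) : C ⥤ G where
  obj d := ∐ fun x : Σ c : C, (c ⟶ d) => Q x.1
  map {d d'} ψ := Sigma.desc fun x => Sigma.ι (fun y : Σ c : C, (c ⟶ d') => Q y.1) ⟨x.1, x.2 ≫ ψ⟩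
  map_id d := Sigma.hom_ext _ _ fun ⟨c, χ⟩ => by
    rw [Sigma.ι_desc, Category.comp_id, Category.comp_id]
  map_comp ψ φ := Sigma.hom_ext _ _ fun ⟨c, χ⟩ => by
    rw [Sigma.ι_desc, Sigma.ι_desc_assoc, Sigma.ι_desc, Category.assoc]

@[simps] noncomputable def freeCounit {Q : C → G} {F : C ⥤ G} (q : ∀ c, Q c ⟶ F.obj c) :
    freeFunctor Q ⟶ F where
  app d := Sigma.desc fun x => q x.1 ≫ F.map x.2
  naturality d d' ψ := Sigma.hom_ext _ _ fun x => by simp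

lemma epi_freeCounit {Q : C → G} {F : C ⥤ G} {q : ∀ c, Q c ⟶ F.obj c} (hq : ∀ c, Epi (q c)) :
    Epi (freeCounit q) := by
  have (d : C) : Epi ((freeCounit q).app d) :=
    have : Sigma.ι _ ⟨d, 𝟙 d⟩ ≫ (freeCounit q).app d = q d := by simp
    epi_of_epi_fac this
  exact NatTrans.epi_of_epi_app _

variable (J : G)

/-- The transpose of the family `r` along the adjunctions `L_c ⊣ ev_c`. -/
noncomputable def freeDualLift {Q : C → G} {E : C ⥤ G}
    (r : ∀ c, pObj J (E.obj c) ⟶ pObj J (Q c)) :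
    dObj J E ⟶ dObj J (freeFunctor Q) where
  app d := dualTranspose J (Sigma.desc fun x : Σ c : C, (c ⟶ d.unop) =>
    dualTranspose J (pMap J (E.map x.2) ≫ r x.1))
  naturality d d' φ := pMap_sigma_hom_ext J fun x => by
    rw [dObj_map, dObj_map, Category.assoc, Category.assoc, dualTranspose_desc_comp_pMap_ι,
      ← pMap_comp, freeFunctor_map, Sigma.ι_desc, dualTranspose_desc_comp_pMap_ι,
      ← Category.assoc, ← pMap_comp, ← Functor.map_comp]

lemma freeDualLift_app_comp_pMap_ι {Q : C → G} {E : C ⥤ G}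
    (r : ∀ c, pObj J (E.obj c) ⟶ pObj J (Q c)) (d : Cᵒᵖ) (x : Σ c : C, (c ⟶ d.unop)) :
    (freeDualLift J r).app d ≫ pMap J (Sigma.ι (fun y : Σ c : C, (c ⟶ d.unop) => Q y.1) x) =
      pMap J (E.map x.2) ≫ r x.1 :=
  dualTranspose_desc_comp_pMap_ι J _ x

lemma dMap_comp_freeDualLift {Q : C → G} {E : C ⥤ G} (p : E ⟶ freeFunctor Q)
    (r : ∀ c, pObj J (E.obj c) ⟶ pObj J (Q c))
    (hr : ∀ c, pMap J (p.app c) ≫ r c =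
      pMap J (Sigma.ι (fun x : Σ c' : C, (c' ⟶ c) => Q x.1) ⟨c, 𝟙 c⟩)) :
    dMap J p ≫ freeDualLift J r = 𝟙 _ := by
  ext d
  refine pMap_sigma_hom_ext J fun x => ?_
  rw [NatTrans.comp_app, dMap_app, Category.assoc, freeDualLift_app_comp_pMap_ι,
    ← Category.assoc, ← pMap_comp, p.naturality, pMap_comp, Category.assoc, hr, ← pMap_comp,
    freeFunctor_map, Sigma.ι_desc, Category.id_comp, NatTrans.id_app, Category.id_comp]

lemma isFlat_freeFunctor {Q : C → G} (hQ : ∀ c, IsFlatG J (Q c)) : IsFlat J (freeFunctor Q) := by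
  intro K E i p w hS
  have hSd (d : C) : (ShortComplex.mk (i.app d) (p.app d)
      (by rw [← NatTrans.comp_app, w, NatTrans.app_zero])).ShortExact :=
    hS.map_of_exact ((evaluation C G).obj d)
  choose r hr using fun c =>
    exists_pMap_comp_eq_pMap_of_isFlatG J (hSd c) (Sigma.ι _ ⟨c, 𝟙 c⟩) (hQ c)
  refine isPure_of_retraction J hS (fun d => ?_) _ (dMap_comp_freeDualLift J p r hr)
  have : IsFlatG J ((freeFunctor Q).obj d) := isFlatG_sigma J fun x => hQ x.1
  exact (this _ _ _ (hSd d)).some.epi_g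

end FreeFunctor

section Statement

variable {C : Type v} [SmallCategory C]
variable [HasLimits G] [HasColimits G] [AB5 G] [HasSeparator G]


theorem statement10_general (J : G)
    (hG : ∀ X : G, ∃ (P : G) (p : P ⟶ X), IsFlatG J P ∧ Epi p) :
    ∀ F : C ⥤ G, ∃ (P : C ⥤ G) (p : P ⟶ F), IsFlat J P ∧ Epi p := by
  intro F
  choose Q q hflat hepi using fun c : C => hG (F.obj c)
  exact ⟨freeFunctor Q, freeCounit q, isFlat_freeFunctor J hflat, epi_freeCounit hepi⟩

/-- The category `A = Fun(C, G)` has enough flat objects: every functor admits an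
epimorphism from a flat functor (assuming every object of `G` admits an epimorphism
from a flat object of `G`). -/
theorem statement10 (J : G) [Injective J] (hJ : IsCoseparator J)
    (hG : ∀ X : G, ∃ (P : G) (p : P ⟶ X), IsFlatG J P ∧ Epi p) :
    ∀ F : C ⥤ G, ∃ (P : C ⥤ G) (p : P ⟶ F), IsFlat J P ∧ Epi p :=
  statement10_general J hG

end Statement

end FlatFunctorsPaper
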